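/- Fix an integer k ≥ 2 and let T be the list [2, 2, k, 2, 2, 2, 2, 2] of length 8. With d the tridiagonal discriminant and ld_j(T) = (d(T_{<j}) + d(T_{>j}))/d(T), one has d(T) = 9(2k − 3) and ld_2(T) + ld_4(T) + ld_6(T) = (2k − 1)/(2k − 3); in particular this sum is strictly greater than 1. -/

import Mathlib

/-- The tridiagonal matrix with diagonal entries given by the list `T`
and entries `-1` on the sub- and super-diagonal. -/
def tridiagMatrix (T : List ℤ) : Matrix (Fin T.length) (Fin T.length) ℤ :=
  Matrix.of fun i j =>
    if i = j then T.get i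
    else if (i : ℕ) + 1 = (j : ℕ) ∨ (j : ℕ) + 1 = (i : ℕ) then -1 else 0

/-- The discriminant of a chain `T`: the determinant of the associated tridiagonal
matrix (so the discriminant of the empty list is `1`). -/
def chainDisc (T : List ℤ) : ℤ := (tridiagMatrix T).det

/-- The log discrepancy of the `j`-th entry (1-indexed) of the chain `T`:
`ld_j(T) = (d(T_{<j}) + d(T_{>j})) / d(T)`. -/
def chainLd (T : List ℤ) (j : ℕ) : ℚ :=
  ((chainDisc (T.take (j - 1)) : ℚ) + (chainDisc (T.drop j) : ℚ)) / (chainDisc T : ℚ)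

/-! The discriminant satisfies the continuant recursion `d(a :: b :: L) = a d(b :: L) - d(L)`
(Laplace expansion along the first row), so all discriminants involved are computed symbolically
in `k`: `d(T) = 9(2k - 3)` and the numerators of `ld_2`, `ld_4`, `ld_6` are `6k - 3`, `3k + 3` and
`9k - 9`, which add up to `9(2k - 1)`. -/

@[simp]
lemma chainDisc_nil : chainDisc [] = 1 := by simp [chainDisc]

@[simp]
lemma chainDisc_singleton (a : ℤ) : chainDisc [a] = a := by
  simp [chainDisc, tridiagMatrix]

lemma tridiagMatrix_submatrix_succ_succ (a : ℤ) (T : List ℤ) :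
    (tridiagMatrix (a :: T)).submatrix Fin.succ Fin.succ = tridiagMatrix T := by
  ext i j
  simp [tridiagMatrix, Fin.ext_iff]

lemma det_tridiagMatrix_submatrix_succ_succAbove_one (a b : ℤ) (L : List ℤ) :
    ((tridiagMatrix (a :: b :: L)).submatrix Fin.succ (Fin.succAbove 1)).det = -chainDisc L := by
  have hminor : ((tridiagMatrix (a :: b :: L)).submatrix Fin.succ (Fin.succAbove 1)).submatrix
      (Fin.succAbove 0) Fin.succ = tridiagMatrix L := by
    ext i j
    simp [tridiagMatrix, Fin.succAbove, Fin.ext_iff]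
  rw [Matrix.det_succ_column_zero, Fin.sum_univ_succ, Fintype.sum_eq_zero _ fun i => ?_, hminor]
  · simp [tridiagMatrix, chainDisc]
  · simp [tridiagMatrix, Fin.succAbove, Fin.ext_iff]

@[simp]
lemma chainDisc_cons_cons (a b : ℤ) (L : List ℤ) :
    chainDisc (a :: b :: L) = a * chainDisc (b :: L) - chainDisc L := by
  have h := Matrix.det_succ_row_zero (tridiagMatrix (a :: b :: L))
  simp only [List.length_cons, Fin.sum_univ_succ] at h
  rw [Fintype.sum_eq_zero _ fun j => ?_, Fin.succAbove_zero, tridiagMatrix_submatrix_succ_succ,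
    Fin.succ_zero_eq_one, det_tridiagMatrix_submatrix_succ_succAbove_one] at h
  · rw [chainDisc, h, ← chainDisc]
    simp [tridiagMatrix, sub_eq_add_neg]
  · simp [tridiagMatrix, Fin.ext_iff]

lemma chainDisc_22k22222 (k : ℤ) : chainDisc [2, 2, k, 2, 2, 2, 2, 2] = 9 * (2 * k - 3) := by
  simp only [chainDisc_cons_cons, chainDisc_singleton, chainDisc_nil]
  ring

lemma chainLd_22k22222_sum (k : ℤ) (hk : 2 * (k : ℚ) - 3 ≠ 0) :
    chainLd [2, 2, k, 2, 2, 2, 2, 2] 2 + chainLd [2, 2, k, 2, 2, 2, 2, 2] 4 +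
        chainLd [2, 2, k, 2, 2, 2, 2, 2] 6 = (2 * (k : ℚ) - 1) / (2 * (k : ℚ) - 3) := by
  simp only [chainLd, chainDisc_22k22222]
  simp only [Nat.add_one_sub_one, List.take_succ_cons, List.take_zero, List.drop_succ_cons,
    List.drop_zero, chainDisc_cons_cons, chainDisc_singleton, chainDisc_nil, Int.cast_ofNat,
    Int.reduceMul, Int.reduceSub, Int.cast_sub, Int.cast_mul, Int.cast_one]
  field_simp
  ring

/-- **Del Pezzo criterion for the chain `[2, 2, k, 2, 2, 2, 2, 2]`.**
For every integer `k ≥ 2` one has `d(T) = 9(2k − 3)` and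
`ld_2(T) + ld_4(T) + ld_6(T) = (2k − 1)/(2k − 3) > 1`. -/
theorem chain_22k22222 (k : ℤ) (hk : 2 ≤ k) :
    chainDisc [2, 2, k, 2, 2, 2, 2, 2] = 9 * (2 * k - 3) ∧
    chainLd [2, 2, k, 2, 2, 2, 2, 2] 2 + chainLd [2, 2, k, 2, 2, 2, 2, 2] 4 +
        chainLd [2, 2, k, 2, 2, 2, 2, 2] 6 =
      (2 * (k : ℚ) - 1) / (2 * (k : ℚ) - 3) ∧
    1 < chainLd [2, 2, k, 2, 2, 2, 2, 2] 2 + chainLd [2, 2, k, 2, 2, 2, 2, 2] 4 +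
        chainLd [2, 2, k, 2, 2, 2, 2, 2] 6 := by
  have hk' : (0 : ℚ) < 2 * k - 3 := by
    have : (2 : ℚ) ≤ k := by exact_mod_cast hk
    linarith
  rw [chainLd_22k22222_sum k hk'.ne', one_lt_div hk']
  exact ⟨chainDisc_22k22222 k, rfl, by linarith⟩
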